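/- arXiv:2501.04209 — 2 statements merged into one kernel-verified Lean document; each statement's English description precedes it below -/
import Mathlib

section
/- Let n be an odd primitive non-deficient number which is abundant (i.e., σ(n) > 2n). Then S(n) > 2·log(24·√2/25)/√n. -/
/-- The sum of the positive divisors of `n`. -/
def sigma1 (n : ℕ) : ℕ := ∑ d ∈ n.divisors, d

/-- `H n = n / φ(n)`. -/
noncomputable def H (n : ℕ) : ℝ := (n : ℝ) / (Nat.totient n : ℝ)

/-- The surplus `S n = H n - 2`. -/
noncomputable def S (n : ℕ) : ℝ := H n - 2

/-!
For every `m` one has `φ(m) σ(m) ≤ m²`, and `φ(q) σ(q) = q² - q/p < q²` for a prime power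
`q = p^k > 1`. Splitting off the full power `q` of a prime dividing `n` therefore gives
`φ(n) σ(n) ≤ (1 - q⁻²) n²`, so `σ(n) ≥ 2n` forces `S(n) ≥ 2 / q²`. If `n` has at least four
prime factors, the smallest such `q` satisfies `q⁴ ≤ n`, whence `S(n) ≥ 2 / √n`.
Otherwise `H(n) ≥ 2` and oddness leave only the prime sets `{3, 5, r}` with `r ∈ {7, 11, 13}`,
where `S(n)` equals `3/16`, `1/16`, `1/32` and `n ≥ 105`, `165`, `585`.
In all cases `S(n)² n ≥ 1/2 > (2 log (24√2/25))²`.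
-/

open Finset Nat

lemma sigma1_eq_sigma_one (n : ℕ) : sigma1 n = ArithmeticFunction.sigma 1 n := by
  rw [ArithmeticFunction.sigma_one_apply]; rfl

lemma sigma1_mul {a b : ℕ} (h : a.Coprime b) : sigma1 (a * b) = sigma1 a * sigma1 b := by
  simp only [sigma1_eq_sigma_one]
  exact ArithmeticFunction.isMultiplicative_sigma.map_mul_of_coprime h

lemma totient_mul_sigma1_mul {a b : ℕ} (h : a.Coprime b) :
    φ (a * b) * sigma1 (a * b) = (φ a * sigma1 a) * (φ b * sigma1 b) := by
  rw [totient_mul h, sigma1_mul h]; ring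

lemma totient_mul_sigma1_prime_pow_lt {p k : ℕ} (hp : p.Prime) (hk : k ≠ 0) :
    φ (p ^ k) * sigma1 (p ^ k) < (p ^ k) ^ 2 := by
  obtain ⟨k, rfl⟩ := exists_eq_succ_of_ne_zero hk
  have hgeom : (∑ i ∈ range (k + 2), p ^ i) * (p - 1) + 1 = p ^ (k + 2) := by
    simpa only [Nat.sub_add_cancel hp.one_le] using geom_sum_mul_add (p - 1) (k + 2)
  rw [totient_prime_pow_succ hp, sigma1_eq_sigma_one,
    ArithmeticFunction.sigma_one_apply_prime_pow hp]
  calc p ^ k * (p - 1) * ∑ i ∈ range (k + 1 + 1), p ^ i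
      = p ^ k * ((∑ i ∈ range (k + 2), p ^ i) * (p - 1)) := by ring
    _ < p ^ k * p ^ (k + 2) := by
        gcongr
        · exact pow_pos hp.pos k
        · omega
    _ = (p ^ (k + 1)) ^ 2 := by ring

lemma totient_mul_sigma1_le_sq (n : ℕ) : φ n * sigma1 n ≤ n ^ 2 := by
  induction n using Nat.recOnPosPrimePosCoprime with
  | prime_pow p k hp hk => exact (totient_mul_sigma1_prime_pow_lt hp hk.ne').le
  | zero => simp
  | one => simp [sigma1]
  | coprime a b _ _ hab iha ihb =>
    rw [totient_mul_sigma1_mul hab, mul_pow]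
    exact Nat.mul_le_mul iha ihb

lemma totient_mul_sigma1_add_sq_ordCompl_le {n p : ℕ} (hn : n ≠ 0) (hp : p.Prime) (hpn : p ∣ n) :
    φ n * sigma1 n + (ordCompl[p] n) ^ 2 ≤ n ^ 2 := by
  have hcop : (ordProj[p] n).Coprime (ordCompl[p] n) := (coprime_ordCompl hp hn).pow_left _
  have hq := totient_mul_sigma1_prime_pow_lt hp (hp.factorization_pos_of_dvd hn hpn).ne'
  have hm := totient_mul_sigma1_le_sq (ordCompl[p] n)
  have hf := totient_mul_sigma1_mul hcop
  rw [ordProj_mul_ordCompl_eq_self] at hf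
  calc φ n * sigma1 n + (ordCompl[p] n) ^ 2
      ≤ ((ordProj[p] n) ^ 2 - 1) * (ordCompl[p] n) ^ 2 + (ordCompl[p] n) ^ 2 := by
        rw [hf]; gcongr; omega
    _ = n ^ 2 := by
        rw [← Nat.succ_mul, Nat.succ_eq_add_one, Nat.sub_add_cancel (by omega), ← mul_pow,
          ordProj_mul_ordCompl_eq_self]

lemma two_mul_totient_le {n : ℕ} (hnd : 2 * n ≤ sigma1 n) : 2 * φ n ≤ n := by
  rcases Nat.eq_zero_or_pos n with rfl | hn
  · simp
  refine Nat.le_of_mul_le_mul_right ?_ hn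
  calc 2 * φ n * n = φ n * (2 * n) := by ring
    _ ≤ φ n * sigma1 n := Nat.mul_le_mul_left _ hnd
    _ ≤ n ^ 2 := totient_mul_sigma1_le_sq n
    _ = n * n := sq n

lemma surplus_nonneg {n : ℕ} (hn : n ≠ 0) (hnd : 2 * n ≤ sigma1 n) : 0 ≤ S n := by
  have hφ : (0 : ℝ) < φ n := by exact_mod_cast totient_pos.mpr (Nat.pos_of_ne_zero hn)
  have h2φ : 2 * (φ n : ℝ) ≤ n := by exact_mod_cast two_mul_totient_le hnd
  rw [S, H, sub_nonneg, le_div_iff₀ hφ]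
  linarith

lemma two_div_sq_ordProj_le_surplus {n p : ℕ} (hn : n ≠ 0) (hnd : 2 * n ≤ sigma1 n)
    (hp : p.Prime) (hpn : p ∣ n) : 2 / ((ordProj[p] n : ℕ) : ℝ) ^ 2 ≤ S n := by
  set q := ordProj[p] n
  set m := ordCompl[p] n
  have hqm : (q : ℝ) * m = n := by exact_mod_cast ordProj_mul_ordCompl_eq_self n p
  have hq : (0 : ℝ) < q := by exact_mod_cast pow_pos hp.pos _
  have hm : (0 : ℝ) < m := by exact_mod_cast ordCompl_pos p hn
  have hφ : (0 : ℝ) < φ n := by exact_mod_cast totient_pos.mpr (Nat.pos_of_ne_zero hn)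
  have hnat : φ n * (2 * n) + m ^ 2 ≤ n ^ 2 :=
    le_trans (by gcongr) (totient_mul_sigma1_add_sq_ordCompl_le hn hp hpn)
  have hgap : (m : ℝ) ^ 2 ≤ n * (n - 2 * φ n) := by
    rw [← Nat.cast_le (α := ℝ)] at hnat; push_cast at hnat; linarith
  have hm_le : (m : ℝ) ≤ q * (n - 2 * φ n) := by
    rw [← hqm] at hgap; nlinarith
  have key : 2 * (φ n : ℝ) ≤ q ^ 2 * (n - 2 * φ n) := by
    have h2φ : 2 * (φ n : ℝ) ≤ n := by exact_mod_cast two_mul_totient_le hnd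
    nlinarith
  have hdiv : 2 * (φ n : ℝ) / q ^ 2 ≤ n - 2 * φ n := by
    rw [div_le_iff₀ (by positivity)]; linarith
  rw [S, H, le_sub_iff_add_le, le_div_iff₀ hφ, add_mul, div_mul_eq_mul_div]
  linarith

lemma exists_ordProj_pow_card_le {n : ℕ} (hn : n ≠ 0) (hne : n.primeFactors.Nonempty) :
    ∃ p ∈ n.primeFactors, (ordProj[p] n) ^ #n.primeFactors ≤ n := by
  obtain ⟨p, hp, hmin⟩ := exists_min_image n.primeFactors (fun p => ordProj[p] n) hne
  refine ⟨p, hp, ?_⟩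
  calc (ordProj[p] n) ^ #n.primeFactors = ∏ _ ∈ n.primeFactors, ordProj[p] n := (prod_const _).symm
    _ ≤ ∏ r ∈ n.primeFactors, ordProj[r] n := prod_le_prod' hmin
    _ = n := (prod_primeFactors_pow_factorization hn).symm

lemma half_le_sq_surplus_mul_of_four_le_card {n : ℕ} (hn : n ≠ 0) (hnd : 2 * n ≤ sigma1 n)
    (h4 : 4 ≤ #n.primeFactors) : 1 / 2 ≤ S n ^ 2 * n := by
  obtain ⟨p, hp, hpow⟩ := exists_ordProj_pow_card_le hn (card_pos.mp (by omega))
  have hp_pos := (prime_of_mem_primeFactors hp).pos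
  have hS := two_div_sq_ordProj_le_surplus hn hnd (prime_of_mem_primeFactors hp)
    (dvd_of_mem_primeFactors hp)
  set q := ordProj[p] n
  have hq : (0 : ℝ) < q := by exact_mod_cast pow_pos hp_pos _
  have hq4 : (q : ℝ) ^ 4 ≤ n := by
    exact_mod_cast (Nat.pow_le_pow_right (pow_pos hp_pos _) h4).trans hpow
  calc 1 / 2 ≤ (2 / (q : ℝ) ^ 2) ^ 2 * q ^ 4 := by field_simp; norm_num
    _ ≤ S n ^ 2 * n := by gcongr

lemma totient_eq_mul_prod_one_sub_inv (n : ℕ) :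
    (φ n : ℝ) = n * ∏ p ∈ n.primeFactors, (1 - (p : ℝ)⁻¹) := by
  have h := congrArg (Rat.cast : ℚ → ℝ) (totient_eq_mul_prod_factors n)
  push_cast at h
  exact h

lemma surplus_eq_inv_prod_sub_two {n : ℕ} (hn : n ≠ 0) :
    S n = (∏ p ∈ n.primeFactors, (1 - (p : ℝ)⁻¹))⁻¹ - 2 := by
  rw [S, H, totient_eq_mul_prod_one_sub_inv, div_mul_cancel_left₀ (by exact_mod_cast hn)]

lemma prod_one_sub_inv_le_half {n : ℕ} (hn : n ≠ 0) (h : 2 * φ n ≤ n) :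
    ∏ p ∈ n.primeFactors, (1 - (p : ℝ)⁻¹) ≤ 1 / 2 := by
  have hn' : (0 : ℝ) < n := by exact_mod_cast Nat.pos_of_ne_zero hn
  have h' : 2 * (φ n : ℝ) ≤ n := by exact_mod_cast h
  rw [totient_eq_mul_prod_one_sub_inv] at h'
  nlinarith

lemma one_sub_inv_nonneg {x : ℕ} (hx : 1 ≤ x) : 0 ≤ 1 - (x : ℝ)⁻¹ :=
  sub_nonneg.2 (inv_le_one_of_one_le₀ (by exact_mod_cast hx))

-- The `i`-th smallest element of `s` is at least `m + 2 i`.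
lemma prod_range_le_prod_one_sub_inv {m k : ℕ} (hm : 1 ≤ m) {s : Finset ℕ}
    (hs : ∀ p ∈ s, Odd p ∧ m ≤ p) (hk : #s ≤ k) :
    ∏ i ∈ range k, (1 - ((m + 2 * i : ℕ) : ℝ)⁻¹) ≤ ∏ p ∈ s, (1 - (p : ℝ)⁻¹) := by
  induction s using Finset.induction_on_min generalizing m k with
  | empty =>
    exact prod_le_one (fun i _ => one_sub_inv_nonneg (by omega))
      (fun i _ => sub_le_self _ (by positivity))
  | insert a t hat ih =>
    have hta : a ∉ t := fun h => lt_irrefl a (hat a h)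
    rw [card_insert_of_notMem hta] at hk
    obtain ⟨k, rfl⟩ : ∃ k', k = k' + 1 := ⟨k - 1, by omega⟩
    obtain ⟨ha_odd, hma⟩ := hs a (mem_insert_self a t)
    have ht : ∀ p ∈ t, Odd p ∧ m + 2 ≤ p := fun p hp => by
      obtain ⟨hp_odd, -⟩ := hs p (mem_insert_of_mem hp)
      obtain ⟨x, rfl⟩ := hp_odd
      obtain ⟨y, rfl⟩ := ha_odd
      have := hat _ hp
      exact ⟨odd_two_mul_add_one x, by omega⟩
    rw [prod_range_succ', prod_insert hta, mul_comm]
    refine mul_le_mul ?_ ?_ ?_ (one_sub_inv_nonneg (by omega))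
    · gcongr
      exact_mod_cast hma
    · simpa only [show ∀ i, m + 2 * (i + 1) = m + 2 + 2 * i by intro; ring]
        using ih (by omega) ht (by omega)
    · exact prod_nonneg fun i _ => one_sub_inv_nonneg (by omega)

lemma mem_seven_eleven_thirteen_of_prod_le_half {c : ℕ} (hc : c.Prime) (hodd : Odd c)
    (h3 : c ≠ 3) (h5 : c ≠ 5)
    (h : (1 - ((3 : ℕ) : ℝ)⁻¹) * ((1 - ((5 : ℕ) : ℝ)⁻¹) * (1 - (c : ℝ)⁻¹)) ≤ 1 / 2) :
    c ∈ ({7, 11, 13} : Finset ℕ) := by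
  have hc16 : c ≤ 16 := by
    have hc0 : (0 : ℝ) < c := by exact_mod_cast hc.pos
    have : (16 : ℝ)⁻¹ ≤ (c : ℝ)⁻¹ := by norm_num at h; linarith
    exact_mod_cast (inv_le_inv₀ (by norm_num) hc0).1 this
  have := hc.two_le
  have := Nat.odd_iff.mp hodd
  obtain rfl | rfl | rfl | rfl | rfl : c = 7 ∨ c = 9 ∨ c = 11 ∨ c = 13 ∨ c = 15 := by omega
  all_goals first | decide | norm_num at hc

lemma eq_three_five_of_prod_one_sub_inv_le_half {s : Finset ℕ}
    (hs : ∀ p ∈ s, p.Prime ∧ Odd p) (hcard : #s ≤ 3)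
    (hprod : ∏ p ∈ s, (1 - (p : ℝ)⁻¹) ≤ 1 / 2) :
    ∃ r ∈ ({7, 11, 13} : Finset ℕ), s = {3, 5, r} := by
  have hs' : ∀ p ∈ s, 2 ≤ p ∧ p % 2 = 1 := fun p hp =>
    ⟨(hs p hp).1.two_le, Nat.odd_iff.mp (hs p hp).2⟩
  have h3 : 3 ∈ s := by
    by_contra h3
    have := prod_range_le_prod_one_sub_inv (m := 5) (by norm_num) (fun p hp =>
      ⟨(hs p hp).2, by have := hs' p hp; have : p ≠ 3 := fun h => h3 (h ▸ hp); omega⟩) hcard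
    norm_num [prod_range_succ] at this
    linarith
  rw [← mul_prod_erase s _ h3] at hprod
  have h5 : 5 ∈ s := by
    by_contra h5
    have := prod_range_le_prod_one_sub_inv (m := 7) (k := 2) (by norm_num) (s := s.erase 3)
      (fun p hp => ⟨(hs p (mem_of_mem_erase hp)).2, by
        have := hs' p (mem_of_mem_erase hp); have := ne_of_mem_erase hp
        have : p ≠ 5 := fun h => h5 (h ▸ mem_of_mem_erase hp); omega⟩)
      (by rw [card_erase_of_mem h3]; omega)
    norm_num [prod_range_succ] at this hprod
    nlinarith
  rw [← mul_prod_erase _ _ (mem_erase.2 ⟨by norm_num, h5⟩)] at hprod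
  set t := (s.erase 3).erase 5 with ht
  have hst : s = insert 3 (insert 5 t) := by
    rw [ht, insert_erase (mem_erase.2 ⟨by norm_num, h5⟩), insert_erase h3]
  have hcard_t : #t = 1 := by
    have hpos : t.Nonempty := by
      rw [nonempty_iff_ne_empty]; rintro h
      norm_num [h] at hprod
    have : #t = #s - 2 := by
      rw [ht, card_erase_of_mem (mem_erase.2 ⟨by norm_num, h5⟩), card_erase_of_mem h3]; omega
    have := hpos.card_pos; omega
  obtain ⟨c, hc⟩ := card_eq_one.mp hcard_t
  have hct : c ∈ t := hc ▸ mem_singleton_self c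
  obtain ⟨hc3, hcs⟩ := mem_erase.1 (mem_of_mem_erase hct)
  refine ⟨c, mem_seven_eleven_thirteen_of_prod_le_half (hs c hcs).1 (hs c hcs).2 hc3
    (ne_of_mem_erase hct) (by rwa [hc, prod_singleton] at hprod), by rw [hst, hc]⟩

lemma half_le_sq_surplus_mul_of_card_le_three {n : ℕ} (hodd : Odd n)
    (hnd : 2 * n ≤ sigma1 n) (h3 : #n.primeFactors ≤ 3) :
    1 / 2 ≤ S n ^ 2 * n := by
  have hn : n ≠ 0 := hodd.pos.ne'
  obtain ⟨r, hr, hpf⟩ := eq_three_five_of_prod_one_sub_inv_le_half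
    (fun p hp => ⟨prime_of_mem_primeFactors hp, hodd.of_dvd_nat (dvd_of_mem_primeFactors hp)⟩) h3
    (prod_one_sub_inv_le_half hn (two_mul_totient_le hnd))
  have hdvd : 3 * (5 * r) ∣ n := by
    have := prod_primeFactors_dvd n
    simp only [mem_insert, mem_singleton] at hr
    rwa [hpf, prod_insert (by simp; omega), prod_insert (by simp; omega), prod_singleton] at this
  rw [surplus_eq_inv_prod_sub_two hn, hpf]
  simp only [mem_insert, mem_singleton] at hr
  rcases hr with rfl | rfl | rfl <;> norm_num at hdvd ⊢
  · have : (105 : ℝ) ≤ n := by exact_mod_cast le_of_dvd hodd.pos hdvd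
    linarith
  · have : (165 : ℝ) ≤ n := by exact_mod_cast le_of_dvd hodd.pos hdvd
    linarith
  · obtain ⟨k, rfl⟩ := hdvd
    -- `195` itself is deficient
    have hk : k ≠ 1 := by
      rintro rfl
      have : sigma1 195 = 336 := by decide
      rw [mul_one] at hnd
      omega
    obtain ⟨j, rfl⟩ := (Nat.odd_mul.mp hodd).2
    have : (3 : ℝ) ≤ ((2 * j + 1 : ℕ) : ℝ) := by exact_mod_cast (by omega : 3 ≤ 2 * j + 1)
    push_cast at this ⊢
    linarith

lemma sq_two_mul_log_lt : (2 * Real.log (24 * √2 / 25)) ^ 2 < 1 / 2 := by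
  have hsq : (24 * √2 / 25) ^ 2 = 1152 / 625 := by
    rw [div_pow, mul_pow, Real.sq_sqrt (by norm_num)]; norm_num
  have hlog : 2 * Real.log (24 * √2 / 25) = Real.log (1152 / 625) := by
    rw [← hsq, Real.log_pow]; push_cast; ring
  have h0 : 0 ≤ Real.log (1152 / 625 : ℝ) := Real.log_nonneg (by norm_num)
  have h1 : Real.log (1152 / 625 : ℝ) < 0.7 :=
    (Real.log_le_log (by norm_num) (by norm_num)).trans_lt (Real.log_two_lt_d9.trans (by norm_num))
  rw [hlog]; nlinarith

lemma div_sqrt_lt_of_sq_lt {c s x : ℝ} (hs : 0 ≤ s) (h : c ^ 2 < s ^ 2 * x) : c / √x < s := by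
  have hx : 0 < x := by
    by_contra! hx; nlinarith [sq_nonneg c, sq_nonneg s]
  rw [div_lt_iff₀ (Real.sqrt_pos.mpr hx)]
  calc c ≤ |c| := le_abs_self c
    _ = √(c ^ 2) := (Real.sqrt_sq_eq_abs c).symm
    _ < √(s ^ 2 * x) := Real.sqrt_lt_sqrt (sq_nonneg c) h
    _ = s * √x := by rw [Real.sqrt_mul (sq_nonneg s), Real.sqrt_sq hs]

theorem surplus_lower_bound_abundant_general (n : ℕ) (hodd : Odd n)
    (hnondef : 2 * n ≤ sigma1 n) :
    S n > 2 * Real.log (24 * Real.sqrt 2 / 25) / Real.sqrt n := by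
  have hn : n ≠ 0 := hodd.pos.ne'
  have hSn : 1 / 2 ≤ S n ^ 2 * n := by
    rcases le_or_gt 4 #n.primeFactors with h4 | h3
    · exact half_le_sq_surplus_mul_of_four_le_card hn hnondef h4
    · exact half_le_sq_surplus_mul_of_card_le_three hodd hnondef (by omega)
  exact div_sqrt_lt_of_sq_lt (surplus_nonneg hn hnondef) (sq_two_mul_log_lt.trans_le hSn)

theorem surplus_lower_bound_abundant (n : ℕ) (hn : 0 < n) (hodd : Odd n)
    (hnondef : 2 * n ≤ sigma1 n)
    (hprim : ∀ d : ℕ, d ∣ n → d < n → sigma1 d < 2 * d)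
    (habundant : 2 * n < sigma1 n) :
    S n > 2 * Real.log (24 * Real.sqrt 2 / 25) / Real.sqrt n :=
  surplus_lower_bound_abundant_general n hodd hnondef
end

section
/- Let n = p₁^{a₁}·p₂^{a₂}···p_k^{a_k} be an even non-deficient number, where p₁, …, p_k are distinct primes and each aᵢ ≥ 1. Let j be an index with 1 ≤ j ≤ k such that p_j^{a_j+1} ≤ pᵢ^{aᵢ+1} for every i with 1 ≤ i ≤ k. Then either p_j = 2 or H(n) ≥ 2 + (7/4)·(1/p_j^{a_j+1}). -/
open Nat ArithmeticFunction
open scoped ArithmeticFunction.sigma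

lemma totient_mul_sigma_one_prime_pow {p a : ℕ} (hp : p.Prime) (ha : 0 < a) :
    (φ (p ^ a) * σ 1 (p ^ a) : ℝ) * p ^ (a + 1) = ((p : ℝ) ^ a) ^ 2 * (p ^ (a + 1) - 1) := by
  obtain ⟨b, rfl⟩ : ∃ b, a = b + 1 := ⟨a - 1, by omega⟩
  rw [sigma_one_apply_prime_pow hp, Nat.totient_prime_pow hp (by omega)]
  push_cast [hp.one_le]
  linear_combination ((p : ℝ) ^ b * p ^ (b + 2)) * geom_sum_mul (p : ℝ) (b + 2)

lemma totient_mul_sigma_one_le_sq (m : ℕ) : φ m * σ 1 m ≤ m ^ 2 := by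
  induction m using Nat.recOnPosPrimePosCoprime with
  | zero => simp
  | one => simp
  | prime_pow p a hp ha =>
    have hx : (0 : ℝ) < (p : ℝ) ^ (a + 1) := by have := hp.pos; positivity
    have h := totient_mul_sigma_one_prime_pow hp ha
    suffices (φ (p ^ a) * σ 1 (p ^ a) : ℝ) ≤ ((p ^ a : ℕ) : ℝ) ^ 2 by exact_mod_cast this
    refine le_of_mul_le_mul_right ?_ hx
    rw [h, Nat.cast_pow]
    exact mul_le_mul_of_nonneg_left (by linarith) (sq_nonneg _)
  | coprime a b _ _ hab iha ihb =>
    rw [Nat.totient_mul hab, isMultiplicative_sigma.map_mul_of_coprime hab]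
    calc φ a * φ b * (σ 1 a * σ 1 b) = (φ a * σ 1 a) * (φ b * σ 1 b) := by ring
      _ ≤ a ^ 2 * b ^ 2 := Nat.mul_le_mul iha ihb
      _ = (a * b) ^ 2 := (mul_pow a b 2).symm

lemma totient_mul_sigma_one_mul_le_of_mem_primeFactors {n q : ℕ} (hq : q ∈ n.primeFactors) :
    (φ n * σ 1 n : ℝ) * q ^ (n.factorization q + 1)
      ≤ (n : ℝ) ^ 2 * (q ^ (n.factorization q + 1) - 1) := by
  obtain ⟨hq, hqn, hn⟩ := Nat.mem_primeFactors.1 hq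
  set a := n.factorization q
  set m := n / q ^ a
  have hnm : q ^ a * m = n := Nat.ordProj_mul_ordCompl_eq_self n q
  have hcop : (q ^ a).Coprime m := (Nat.coprime_ordCompl hq hn).pow_left a
  have hm : (φ m * σ 1 m : ℝ) ≤ (m : ℝ) ^ 2 := by exact_mod_cast totient_mul_sigma_one_le_sq m
  have hx : (1 : ℝ) ≤ (q : ℝ) ^ (a + 1) := one_le_pow₀ (by exact_mod_cast hq.one_le)
  rw [← hnm, Nat.totient_mul hcop, isMultiplicative_sigma.map_mul_of_coprime hcop]
  push_cast
  calc (φ (q ^ a) * φ m * (σ 1 (q ^ a) * σ 1 m) : ℝ) * q ^ (a + 1)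
      = ((φ (q ^ a) * σ 1 (q ^ a) : ℝ) * q ^ (a + 1)) * (φ m * σ 1 m) := by ring
    _ = ((q : ℝ) ^ a) ^ 2 * (q ^ (a + 1) - 1) * (φ m * σ 1 m) := by
      rw [totient_mul_sigma_one_prime_pow hq (hq.factorization_pos_of_dvd hn hqn)]
    _ ≤ ((q : ℝ) ^ a) ^ 2 * (q ^ (a + 1) - 1) * m ^ 2 := by gcongr
    _ = ((q : ℝ) ^ a * m) ^ 2 * (q ^ (a + 1) - 1) := by ring

theorem H_lower_bound_of_min_prime_power_even_general (n : ℕ)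
    (hnondef : 2 * n ≤ sigma1 n)
    (q : ℕ) (hq : q ∈ n.primeFactors) :
    q = 2 ∨ H n ≥ 2 + (7 / 4) * (1 / (q ^ (n.factorization q + 1) : ℝ)) := by
  right
  have hn : (0 : ℝ) < n := by exact_mod_cast Nat.pos_of_ne_zero (Nat.mem_primeFactors.1 hq).2.2
  set x : ℝ := q ^ (n.factorization q + 1)
  have hx : 0 < x := by have := Nat.pos_of_mem_primeFactors hq; positivity
  have hσ : (2 * n : ℝ) ≤ σ 1 n := by rw [sigma_one_apply]; exact_mod_cast hnondef
  have key : 2 * φ n * x ≤ n * (x - 1) := by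
    refine le_of_mul_le_mul_left ?_ hn
    calc n * (2 * φ n * x) = (φ n * x : ℝ) * (2 * n) := by ring
      _ ≤ (φ n * x : ℝ) * σ 1 n := by gcongr
      _ = (φ n * σ 1 n : ℝ) * x := by ring
      _ ≤ n ^ 2 * (x - 1) := totient_mul_sigma_one_mul_le_of_mem_primeFactors hq
      _ = n * (n * (x - 1)) := by ring
  rw [ge_iff_le, H, le_div_iff₀ (by exact_mod_cast Nat.totient_pos.2 (Nat.cast_pos.1 hn))]
  refine le_of_mul_le_mul_right ?_ (by positivity : 0 < 2 * x)
  calc (2 + 7 / 4 * (1 / x)) * φ n * (2 * x) = (2 + 7 / 4 * (1 / x)) * (2 * φ n * x) := by ring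
    _ ≤ (2 + 7 / 4 * (1 / x)) * (n * (x - 1)) := by gcongr
    _ = n * (2 * x) - n * (1 / 4 + 7 / 4 * (1 / x)) := by field_simp; ring
    _ ≤ n * (2 * x) := sub_le_self _ (by positivity)

theorem H_lower_bound_of_min_prime_power_even (n : ℕ) (hn : 0 < n) (heven : Even n)
    (hnondef : 2 * n ≤ sigma1 n)
    (q : ℕ) (hq : q ∈ n.primeFactors)
    (hmin : ∀ p ∈ n.primeFactors,
      q ^ (n.factorization q + 1) ≤ p ^ (n.factorization p + 1)) :
    q = 2 ∨ H n ≥ 2 + (7 / 4) * (1 / (q ^ (n.factorization q + 1) : ℝ)) :=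
  H_lower_bound_of_min_prime_power_even_general n hnondef q hq
end
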